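/- Let S be a nonempty finite type, let p : S → ℝ with p(s) > 0 for all s and Σ_s p(s) = 1, let L : S → ℝ with L(s) > 0 for all s, let E = Σ_s p(s)·L(s), and let π(s) = p(s)·L(s)/E. Then for every q : S → ℝ with q(s) > 0 for all s and Σ_s q(s) = 1, equality log E = Σ_s q(s)·log L(s) - KL(q‖p) holds if and only if q = π. -/
import Mathlib

open Finset

/-- Discrete Kullback–Leibler divergence between probability mass functions
on a finite type. -/
noncomputable def dKL {S : Type*} [Fintype S] (q p : S → ℝ) : ℝ :=
  ∑ s, q s * Real.log (q s / p s)

lemma gibbs_aux {S : Type*} [Fintype S] (q r : S → ℝ)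
    (hq : ∀ s, 0 < q s) (hr : ∀ s, 0 < r s)
    (hqs : ∑ s, q s = 1) (hrs : ∑ s, r s = 1) :
    (∑ s, q s * Real.log (r s / q s)) = 0 ↔ q = r := by
  constructor
  · intro h
    by_contra hne
    obtain ⟨s0, hs0⟩ : ∃ s0, q s0 ≠ r s0 := by
      by_contra hall
      push_neg at hall
      exact hne (funext hall)
    have hlt : (∑ s, q s * Real.log (r s / q s)) < ∑ s, (r s - q s) := by
      apply Finset.sum_lt_sum
      · intro s _
        have hx : 0 < r s / q s := div_pos (hr s) (hq s)
        have := Real.log_le_sub_one_of_pos hx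
        have h2 : q s * Real.log (r s / q s) ≤ q s * (r s / q s - 1) :=
          mul_le_mul_of_nonneg_left this (hq s).le
        calc q s * Real.log (r s / q s) ≤ q s * (r s / q s - 1) := h2
          _ = r s - q s := by rw [mul_sub, mul_one, mul_div_cancel₀ _ (hq s).ne']
      · refine ⟨s0, Finset.mem_univ s0, ?_⟩
        have hx : 0 < r s0 / q s0 := div_pos (hr s0) (hq s0)
        have hx1 : r s0 / q s0 ≠ 1 := by
          intro hc
          exact hs0 ((div_eq_one_iff_eq (hq s0).ne').mp hc).symm
        have := Real.log_lt_sub_one_of_pos hx hx1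
        have h2 : q s0 * Real.log (r s0 / q s0) < q s0 * (r s0 / q s0 - 1) :=
          mul_lt_mul_of_pos_left this (hq s0)
        calc q s0 * Real.log (r s0 / q s0) < q s0 * (r s0 / q s0 - 1) := h2
          _ = r s0 - q s0 := by rw [mul_sub, mul_one, mul_div_cancel₀ _ (hq s0).ne']
    rw [Finset.sum_sub_distrib, hqs, hrs, sub_self, h] at hlt
    exact lt_irrefl _ hlt
  · intro h
    subst h
    simp [div_self (hq _).ne']

/-- The discrete ELBO is tight exactly when the variational distribution
equals the true posterior `π(s) = p(s)·L(s)/E`. -/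
theorem discrete_elbo_tight_iff {S : Type*} [Fintype S] [Nonempty S]
    (p L : S → ℝ) (hp : ∀ s, 0 < p s) (hpsum : ∑ s, p s = 1)
    (hL : ∀ s, 0 < L s)
    (E : ℝ) (hE : E = ∑ s, p s * L s)
    (post : S → ℝ) (hpost : ∀ s, post s = p s * L s / E)
    (q : S → ℝ) (hq : ∀ s, 0 < q s) (hqsum : ∑ s, q s = 1) :
    Real.log E = (∑ s, q s * Real.log (L s)) - dKL q p ↔ q = post := by
  have hEpos : 0 < E := by
    rw [hE]
    exact Finset.sum_pos (fun s _ => mul_pos (hp s) (hL s)) Finset.univ_nonempty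
  have hrpos : ∀ s, 0 < post s := fun s => by
    rw [hpost]; exact div_pos (mul_pos (hp s) (hL s)) hEpos
  have hrsum : ∑ s, post s = 1 := by
    have h0 : ∑ s, post s = ∑ s, p s * L s / E := Finset.sum_congr rfl fun s _ => hpost s
    rw [h0, ← Finset.sum_div, ← hE, div_self hEpos.ne']
  have key : (∑ s, q s * Real.log (L s)) - dKL q p
      = Real.log E + ∑ s, q s * Real.log (post s / q s) := by
    rw [dKL, ← Finset.sum_sub_distrib]
    have : ∀ s ∈ Finset.univ, q s * Real.log (L s) - q s * Real.log (q s / p s)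
        = q s * Real.log E + q s * Real.log (post s / q s) := by
      intro s _
      have h1 : post s / q s = p s * L s / E / q s := by rw [hpost]
      rw [h1, Real.log_div (div_pos (mul_pos (hp s) (hL s)) hEpos).ne' (hq s).ne',
        Real.log_div (mul_pos (hp s) (hL s)).ne' hEpos.ne',
        Real.log_div (hq s).ne' (hp s).ne',
        Real.log_mul (hp s).ne' (hL s).ne']
      ring
    rw [Finset.sum_congr rfl this, Finset.sum_add_distrib, ← Finset.sum_mul, hqsum, one_mul]
  rw [key]
  rw [← gibbs_aux q post hq hrpos hqsum hrsum]
  constructor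
  · intro h; linarith
  · intro h; rw [h]; ring
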